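/- Let G be a graph with nonnegative integral edge weights and let w be a positive integer with w ≥ girth(G). Then girth(round(G, w)) = girth(G). -/

import Mathlib

open SimpleGraph

variable {V : Type*}

/-- The weight of a walk: the sum of the weights of its edges. -/
def walkWeight {G : SimpleGraph V} (w : Sym2 V → ℕ) {u v : V} (p : G.Walk u v) : ℕ :=
  (p.edges.map w).sum

/-- The girth of a weighted graph: the minimum total weight of a simple cycle
(`⊤` if there is no cycle). -/
noncomputable def wgirth (G : SimpleGraph V) (w : Sym2 V → ℕ) : ℕ∞ :=
  sInf {n : ℕ∞ | ∃ (u : V) (p : G.Walk u u), p.IsCycle ∧ n = (walkWeight w p : ℕ∞)}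

/-- Weighted shortest-path distance (`⊤` if there is no walk). -/
noncomputable def wdist (G : SimpleGraph V) (w : Sym2 V → ℕ) (u v : V) : ℕ∞ :=
  sInf {n : ℕ∞ | ∃ p : G.Walk u v, n = (walkWeight w p : ℕ∞)}

section Expand

variable [LinearOrder V]

/-- Internal vertices of the expanded version of `(G, w)`: for each edge `{a, b}`
with `a < b` of weight `k = w s(a,b)`, the `k - 1` internal vertices of the
replacing path, indexed by `1 ≤ i ≤ k - 1`. -/
abbrev InnerVert (G : SimpleGraph V) (w : Sym2 V → ℕ) : Type _ :=
  {x : V × V × ℕ // x.1 < x.2.1 ∧ G.Adj x.1 x.2.1 ∧ 0 < x.2.2 ∧ x.2.2 < w s(x.1, x.2.1)}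

/-- One direction of the adjacency of the (pre-contraction) expanded graph. -/
def preRel (G : SimpleGraph V) (w : Sym2 V → ℕ) :
    (V ⊕ InnerVert G w) → (V ⊕ InnerVert G w) → Prop
  | .inl u, .inl v => G.Adj u v ∧ w s(u, v) = 1
  | .inl u, .inr x =>
      (u = x.val.1 ∧ x.val.2.2 = 1) ∨ (u = x.val.2.1 ∧ x.val.2.2 + 1 = w s(x.val.1, x.val.2.1))
  | .inr x, .inr y => x.val.1 = y.val.1 ∧ x.val.2.1 = y.val.2.1 ∧ x.val.2.2 + 1 = y.val.2.2
  | _, _ => False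

/-- The expanded graph before contracting the zero-weight edges: every edge of
weight `k ≥ 1` is replaced by a path of `k` unit edges. -/
def preExpand (G : SimpleGraph V) (w : Sym2 V → ℕ) : SimpleGraph (V ⊕ InnerVert G w) :=
  SimpleGraph.fromRel (preRel G w)

/-- Relation generating the identifications coming from zero-weight edges. -/
def zeroRel (G : SimpleGraph V) (w : Sym2 V → ℕ) (x y : V ⊕ InnerVert G w) : Prop :=
  ∃ u v : V, x = .inl u ∧ y = .inl v ∧ G.Adj u v ∧ w s(u, v) = 0

/-- Vertices of the expanded version `expand(G)`: vertices of the subdivision,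
with the two endpoints of each zero-weight edge merged. -/
def ExpandVert (G : SimpleGraph V) (w : Sym2 V → ℕ) : Type _ :=
  Quot (zeroRel G w)

/-- The expanded version `expand(G)` of the weighted graph `(G, w)`, as an
unweighted simple graph. -/
def expandGraph (G : SimpleGraph V) (w : Sym2 V → ℕ) : SimpleGraph (ExpandVert G w) :=
  SimpleGraph.fromRel
    (fun x y => ∃ a b : V ⊕ InnerVert G w,
      x = Quot.mk _ a ∧ y = Quot.mk _ b ∧ (preExpand G w).Adj a b)

end Expand

/-- `round(G, W)`: decrease every edge weight exceeding `W` down to `W`. -/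
def roundW (w : Sym2 V → ℕ) (W : ℕ) : Sym2 V → ℕ := fun e => min (w e) W

/-!
Rounding never increases a weight, so it cannot increase the girth. Conversely, a cycle
either has all its weights at most `W`, in which case rounding leaves its weight unchanged,
or it contains an edge rounded down to `W`, in which case its rounded weight is still at
least `W ≥ girth(G)`.
-/

section WalkWeight

variable {G : SimpleGraph V} {u v : V}

theorem walkWeight_mono {w w' : Sym2 V → ℕ} (h : ∀ e, w e ≤ w' e) (p : G.Walk u v) :
    walkWeight w p ≤ walkWeight w' p :=
  List.sum_le_sum fun e _ => h e

theorem walkWeight_congr {w w' : Sym2 V → ℕ} {p : G.Walk u v} (h : ∀ e ∈ p.edges, w e = w' e) :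
    walkWeight w p = walkWeight w' p :=
  congrArg List.sum (List.map_congr_left h)

theorem le_walkWeight_of_mem_edges (w : Sym2 V → ℕ) {p : G.Walk u v} {e : Sym2 V}
    (he : e ∈ p.edges) : w e ≤ walkWeight w p :=
  List.single_le_sum (fun _ _ => Nat.zero_le _) _ (List.mem_map_of_mem he)

end WalkWeight

section Girth

variable {G : SimpleGraph V}

theorem wgirth_le_walkWeight (w : Sym2 V → ℕ) {u : V} {p : G.Walk u u} (hp : p.IsCycle) :
    wgirth G w ≤ walkWeight w p :=
  sInf_le ⟨u, p, hp, rfl⟩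

theorem le_wgirth_iff {w : Sym2 V → ℕ} {n : ℕ∞} :
    n ≤ wgirth G w ↔ ∀ (u : V) (p : G.Walk u u), p.IsCycle → n ≤ walkWeight w p := by
  simp only [wgirth, le_sInf_iff, Set.mem_ofPred_eq]
  exact ⟨fun h u p hp => h _ ⟨u, p, hp, rfl⟩, fun h _ ⟨u, p, hp, hn⟩ => hn ▸ h u p hp⟩

theorem wgirth_mono {w w' : Sym2 V → ℕ} (h : ∀ e, w e ≤ w' e) : wgirth G w ≤ wgirth G w' :=
  le_wgirth_iff.2 fun _ _ hp =>
    (wgirth_le_walkWeight w hp).trans (by exact_mod_cast walkWeight_mono h _)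

end Girth

theorem roundW_le (w : Sym2 V → ℕ) (W : ℕ) (e : Sym2 V) : roundW w W e ≤ w e :=
  min_le_left _ _

theorem wgirth_le_wgirth_roundW {G : SimpleGraph V} {w : Sym2 V → ℕ} {W : ℕ}
    (hg : wgirth G w ≤ W) : wgirth G w ≤ wgirth G (roundW w W) := by
  refine le_wgirth_iff.2 fun u p hp => ?_
  by_cases hheavy : ∃ e ∈ p.edges, W < w e
  · obtain ⟨e, he, hWe⟩ := hheavy
    have hround : roundW w W e = W := min_eq_right hWe.le
    calc wgirth G w ≤ W := hg
      _ ≤ walkWeight (roundW w W) p := by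
        exact_mod_cast hround ▸ le_walkWeight_of_mem_edges (roundW w W) he
  · have hlight : ∀ e ∈ p.edges, roundW w W e = w e := fun e he =>
      min_eq_left (not_lt.1 fun hWe => hheavy ⟨e, he, hWe⟩)
    rw [walkWeight_congr hlight]
    exact wgirth_le_walkWeight w hp

theorem wgirth_round_eq_general {V : Type*} (G : SimpleGraph V) (w : Sym2 V → ℕ)
    (W : ℕ) (hg : wgirth G w ≤ (W : ℕ∞)) :
    wgirth G (roundW w W) = wgirth G w :=
  le_antisymm (wgirth_mono (roundW_le w W)) (wgirth_le_wgirth_roundW hg)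

/-- If `W` is a positive integer with `W ≥ girth(G)`, then
`girth(round(G, W)) = girth(G)`. -/
theorem wgirth_round_eq {V : Type*} (G : SimpleGraph V) (w : Sym2 V → ℕ)
    (W : ℕ) (hW : 0 < W) (hg : wgirth G w ≤ (W : ℕ∞)) :
    wgirth G (roundW w W) = wgirth G w :=
  wgirth_round_eq_general G w W hg
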